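/- arXiv:2309.04586 — 4 statements merged into one kernel-verified Lean document; each statement's English description precedes it below -/
import Mathlib

section
/- For every real number δ with 1/3 < δ < 1/2, we have min(δ, (1 - 3δ + 2δ²)/(4δ²)) ≤ 0.358. -/
/-- `1 - 3δ + 2δ² - 0.358 · 4δ²` is a convex quadratic in `δ`, negative at both endpoints. -/
lemma one_sub_three_mul_add_two_mul_sq_div_four_mul_sq_le {δ : ℝ} (hlo : 0.358 ≤ δ)
    (hhi : δ ≤ 1/2) : (1 - 3*δ + 2*δ^2) / (4*δ^2) ≤ 0.358 := by
  rw [div_le_iff₀ (by positivity)]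
  nlinarith [mul_nonpos_of_nonneg_of_nonpos (sub_nonneg.2 hlo) (sub_nonpos.2 hhi)]

theorem stmt_0_general (δ : ℝ) (h2 : δ < 1/2) :
    min δ ((1 - 3*δ + 2*δ^2) / (4*δ^2)) ≤ 0.358 := by
  rcases le_or_gt δ 0.358 with hle | hgt
  · exact (min_le_left _ _).trans hle
  · exact (min_le_right _ _).trans
      (one_sub_three_mul_add_two_mul_sq_div_four_mul_sq_le hgt.le h2.le)

theorem stmt_0 (δ : ℝ) (h1 : 1/3 < δ) (h2 : δ < 1/2) :
    min δ ((1 - 3*δ + 2*δ^2) / (4*δ^2)) ≤ 0.358 :=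
  stmt_0_general δ h2
end

section
/- Let N be a positive real number. Suppose X₁, X₂, X₃, Y₁, Y₂, Y₃ are nonnegative reals with X₁ + X₂ + X₃ + Y₁ + Y₂ + Y₃ ≤ N. Then there exist indices i ≠ j in {1,2,3} and k ∈ {1,2,3} such that X_k + Y_i ≤ N/3 and X_k + Y_j ≤ N/3, or there exist indices i ≠ j and k such that Y_k + X_i ≤ N/3 and Y_k + X_j ≤ N/3. -/
/-!
Sort both triples, `a₀ ≤ a₁ ≤ a₂` and `b₀ ≤ b₁ ≤ b₂`. Pairing the smallest `a` with the two
smallest `b` works unless `a₀ + b₁ > N / 3`, and symmetrically unless `b₀ + a₁ > N / 3`. But the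
total is at least `a₀ + 2 a₁ + b₀ + 2 b₁ ≥ (a₀ + b₁) + 2 (b₀ + a₁)`, so both cannot fail.
-/

lemma Fin.sum_three_comp_perm {M : Type*} [AddCommMonoid M] (f : Fin 3 → M)
    (σ : Equiv.Perm (Fin 3)) : f (σ 0) + f (σ 1) + f (σ 2) = f 0 + f 1 + f 2 := by
  simpa only [Fin.sum_univ_three, Function.comp_apply] using Equiv.sum_comp σ f

lemma add_le_third_or_add_le_third_of_sum_le {a₀ a₁ a₂ b₀ b₁ b₂ N : ℝ}
    (ha : a₁ ≤ a₂) (hb₀ : b₀ ≤ b₁) (hb₁ : b₁ ≤ b₂)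
    (hsum : a₀ + a₁ + a₂ + b₀ + b₁ + b₂ ≤ N) :
    a₀ + b₁ ≤ N / 3 ∨ b₀ + a₁ ≤ N / 3 := by
  by_contra! h
  linarith [h.1, h.2]

theorem stmt_3_general (N : ℝ) (X Y : Fin 3 → ℝ)
    (hsum : X 0 + X 1 + X 2 + Y 0 + Y 1 + Y 2 ≤ N) :
    (∃ i j k : Fin 3, i ≠ j ∧ X k + Y i ≤ N/3 ∧ X k + Y j ≤ N/3) ∨
    (∃ i j k : Fin 3, i ≠ j ∧ Y k + X i ≤ N/3 ∧ Y k + X j ≤ N/3) := by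
  set σ := Tuple.sort X
  set τ := Tuple.sort Y
  have hσ : ∀ ⦃a b⦄, a ≤ b → X (σ a) ≤ X (σ b) := Tuple.monotone_sort X
  have hτ : ∀ ⦃a b⦄, a ≤ b → Y (τ a) ≤ Y (τ b) := Tuple.monotone_sort Y
  have h01 : (0 : Fin 3) ≤ 1 := by decide
  have h12 : (1 : Fin 3) ≤ 2 := by decide
  have hne : ∀ π : Equiv.Perm (Fin 3), π 0 ≠ π 1 := fun π => π.injective.ne (by decide)
  have hsorted : X (σ 0) + X (σ 1) + X (σ 2) + Y (τ 0) + Y (τ 1) + Y (τ 2) ≤ N := by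
    linarith [Fin.sum_three_comp_perm X σ, Fin.sum_three_comp_perm Y τ]
  rcases add_le_third_or_add_le_third_of_sum_le (hσ h12) (hτ h01) (hτ h12) hsorted with h | h
  · exact Or.inl ⟨τ 0, τ 1, σ 0, hne τ, by linarith [hτ h01], h⟩
  · exact Or.inr ⟨σ 0, σ 1, τ 0, hne σ, by linarith [hσ h01], h⟩

theorem stmt_3 (N : ℝ) (hN : 0 < N) (X Y : Fin 3 → ℝ)
    (hX : ∀ i, 0 ≤ X i) (hY : ∀ i, 0 ≤ Y i)
    (hsum : X 0 + X 1 + X 2 + Y 0 + Y 1 + Y 2 ≤ N) :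
    (∃ i j k : Fin 3, i ≠ j ∧ X k + Y i ≤ N/3 ∧ X k + Y j ≤ N/3) ∨
    (∃ i j k : Fin 3, i ≠ j ∧ Y k + X i ≤ N/3 ∧ Y k + X j ≤ N/3) :=
  stmt_3_general N X Y hsum
end

section
/- Let n ≥ 1 and 0 < ε ≤ 1/2 with n/ε and n/ε² integers, and let k_A, k_B be the numbers of rounds in which Alice and Bob speak, with k_A, k_B ≥ n/ε and k_A + k_B < n/ε². Then ((k_A - n/ε)/2 + (k_B + n/ε - n + 1)/2)/(k_A + k_B) ≥ 1/2 - ε/4; that is, if the adversary corrupts at least (k_A - n/ε)/2 of Alice's rounds and at least (k_B + n/ε - n + 1)/2 of Bob's rounds, then the fraction of corrupted rounds among the k_A + k_B rounds is at least 1/2 - ε/4. -/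
theorem stmt_7 (n ε kA kB : ℝ) (hn : 1 ≤ n) (hε0 : 0 < ε) (hε : ε ≤ 1/2)
    (hint1 : ∃ a : ℤ, n/ε = a) (hint2 : ∃ b : ℤ, n/ε^2 = b)
    (hA : n/ε ≤ kA) (hB : n/ε ≤ kB) (hlen : kA + kB < n/ε^2) :
    ((kA - n/ε)/2 + (kB + n/ε - n + 1)/2) / (kA + kB) ≥ 1/2 - ε/4 := by
  have hnε : 2*n/ε ≤ kA + kB := by
    have h2 : 2*n/ε = n/ε + n/ε := by ring
    linarith
  have hS : 0 < kA + kB := by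
    have h1 : 0 < n/ε := div_pos (by linarith) hε0
    linarith
  have hεS : 2*n ≤ ε*(kA+kB) := by
    rw [div_le_iff₀ hε0] at hnε
    nlinarith
  rw [ge_iff_le, le_div_iff₀ hS]
  nlinarith
end

section
/- Let N > 0 and let t ∈ [0, N/2] denote the number of corruptions Bob observes among Alice's N symbols, after which Bob sends m(t) = √2·N - 2√2·t symbols. Then for all t ∈ [0, N/2], the total corruption needed to fool the protocol, t + m(t)/2, as a fraction of the total protocol length N + m(t), is at least 1/(2+√2); formally, (t + (√2·N - 2√2·t)/2)/(N + √2·N - 2√2·t) ≥ 1/(2+√2) for all 0 ≤ t ≤ N/2. -/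
/-! With `n = t + m/2` the corruption and `d = N + m` the length, one has
`(2 + √2) n = d + √2 t` identically in `N` and `t`: the constant `√2` in `m` is exactly the one that
cancels the `N`-terms. So the ratio `n / d` exceeds `1 / (2 + √2)` by a multiple of `t ≥ 0`,
with equality when Bob observes no corruption. -/

namespace TerminationProtocol

open Real

lemma two_add_sqrt_two_mul_corruption (N t : ℝ) :
    (2 + √2) * (t + (√2 * N - 2 * √2 * t) / 2) = (N + √2 * N - 2 * √2 * t) + √2 * t := by
  have hs : √2 * √2 = 2 := mul_self_sqrt zero_le_two
  linear_combination (N / 2 - t) * hs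

lemma self_le_total_length {N t : ℝ} (ht : t ≤ N / 2) : N ≤ N + √2 * N - 2 * √2 * t := by
  have : 0 ≤ √2 * (N - 2 * t) := mul_nonneg (sqrt_nonneg 2) (by linarith)
  linarith

end TerminationProtocol

open TerminationProtocol in
theorem stmt_9 (N t : ℝ) (hN : 0 < N) (ht0 : 0 ≤ t) (ht : t ≤ N/2) :
    (t + (Real.sqrt 2 * N - 2 * Real.sqrt 2 * t)/2) /
      (N + Real.sqrt 2 * N - 2 * Real.sqrt 2 * t) ≥ 1/(2 + Real.sqrt 2) := by
  have hlen : 0 < N + Real.sqrt 2 * N - 2 * Real.sqrt 2 * t := hN.trans_le (self_le_total_length ht)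
  rw [ge_iff_le, div_le_div_iff₀ (by positivity) hlen, one_mul, mul_comm _ (2 + _),
    two_add_sqrt_two_mul_corruption]
  have : 0 ≤ Real.sqrt 2 * t := mul_nonneg (Real.sqrt_nonneg 2) ht0
  linarith
end
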